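/- arXiv:1404.6978 — 10 statements merged into one kernel-verified Lean document; each statement's English description precedes it below -/
import Mathlib

section
/- For every nonnegative integer n, f_n = ∑_{k=0}^{n} C(n+2k,3k)·C(3k,k)·C(2k,k)·(-4)^{n-k}. -/
/-- The Franel numbers: `f n = ∑_{k=0}^n C(n,k)^3`. -/
def franel (n : ℕ) : ℕ := ∑ k ∈ Finset.range (n + 1), (n.choose k) ^ 3

/-!
Both sides satisfy the Franel recurrence
`(n + 2)² a (n + 2) = (7n² + 21n + 16) a (n + 1) + 8 (n + 1)² a n`
and agree at `n = 0, 1`. For each side the recurrence is proved by creative telescoping: applied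
to the summand, the recurrence operator equals `G n (k + 1) - G n k` for an explicit certificate
`G`, and summing over `k` leaves only boundary values of `G`, which vanish. The certificate
identities become rational-function identities once every shifted summand is written as a
rational multiple of a single binomial or multinomial coefficient.
-/

open Finset

namespace Nat

variable {K : Type*} [Field K] [LinearOrder K] [IsStrictOrderedRing K]

theorem cast_choose_succ_right_eq (n k : ℕ) :
    (n.choose (k + 1) : K) = n.choose k * (n - k) / (k + 1) := by
  rw [eq_div_iff (by positivity)]
  rcases le_or_gt k n with h | h
  · have := congrArg (Nat.cast : ℕ → K) (choose_succ_right_eq n k)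
    push_cast [h] at this
    exact this
  · simp [choose_eq_zero_of_lt h, choose_eq_zero_of_lt (h.trans (lt_add_one k))]

theorem cast_choose_eq_succ_left (n k : ℕ) :
    (n.choose k : K) = (n + 1).choose k * (n + 1 - k) / (n + 1) := by
  rw [eq_div_iff (by positivity)]
  rcases le_or_gt k (n + 1) with h | h
  · have := congrArg (Nat.cast : ℕ → K) (choose_mul_succ_eq n k)
    push_cast [h] at this
    exact this
  · simp [choose_eq_zero_of_lt h, choose_eq_zero_of_lt (lt_of_succ_lt h)]

theorem cast_choose_succ_succ_eq (n k : ℕ) :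
    ((n + 1).choose (k + 1) : K) = n.choose k * (n + 1) / (k + 1) := by
  rw [eq_div_iff (by positivity)]
  exact_mod_cast (add_one_mul_choose_eq n k).symm.trans (mul_comm _ _)

end Nat

open Nat

/-- The multinomial coefficient `(n + 2k)! / ((n - k)! k! k! k!)` (zero when `n < k`). -/
def multinomCoeff (n k : ℕ) : ℕ :=
  (n + 2 * k).choose (3 * k) * (3 * k).choose k * (2 * k).choose k

section MultinomCoeff

variable {K : Type*} [Field K] [LinearOrder K] [IsStrictOrderedRing K]

theorem cast_multinomCoeff_eq_succ_left (n k : ℕ) :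
    (multinomCoeff n k : K) = multinomCoeff (n + 1) k * (n + 1 - k) / (n + 2 * k + 1) := by
  have h := cast_choose_eq_succ_left (K := K) (n + 2 * k) (3 * k)
  rw [show n + 2 * k + 1 = n + 1 + 2 * k by ring] at h
  simp only [multinomCoeff, cast_mul, h]
  push_cast
  field_simp
  ring

theorem cast_multinomCoeff_succ_right_eq (n k : ℕ) :
    (multinomCoeff n (k + 1) : K) =
      multinomCoeff n k * (n - k) * (n + 2 * k + 1) * (n + 2 * k + 2) / (k + 1) ^ 3 := by
  have htrinomial : ((3 * (k + 1)).choose (k + 1) * (2 * (k + 1)).choose (k + 1) : K) =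
      (3 * k).choose k * (2 * k).choose k * ((3 * k + 1) * (3 * k + 2) * (3 * k + 3)) /
        (k + 1) ^ 3 := by
    rw [cast_choose K (by omega : k + 1 ≤ 3 * (k + 1)),
      cast_choose K (by omega : k + 1 ≤ 2 * (k + 1)), cast_choose K (by omega : k ≤ 3 * k),
      cast_choose K (by omega : k ≤ 2 * k), show 3 * (k + 1) - (k + 1) = 2 * (k + 1) by omega,
      show 2 * (k + 1) - (k + 1) = k + 1 by omega, show 3 * k - k = 2 * k by omega,
      show 2 * k - k = k by omega, show 3 * (k + 1) = 3 * k + 2 + 1 by ring,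
      show 2 * (k + 1) = 2 * k + 1 + 1 by ring]
    simp only [factorial_succ]
    push_cast
    field_simp
    ring
  simp only [multinomCoeff, cast_mul, mul_assoc, htrinomial]
  rw [show n + 2 * (k + 1) = n + 2 * k + 1 + 1 by ring,
    show 3 * (k + 1) = 3 * k + 1 + 1 + 1 by ring,
    cast_choose_succ_right_eq, cast_choose_succ_succ_eq, cast_choose_succ_succ_eq]
  push_cast
  field_simp
  ring

end MultinomCoeff

def FranelRecurrence (a : ℕ → ℚ) : Prop :=
  ∀ n : ℕ, ((n : ℚ) + 2) ^ 2 * a (n + 2) =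
    (7 * n ^ 2 + 21 * n + 16) * a (n + 1) + 8 * (n + 1) ^ 2 * a n

theorem FranelRecurrence.unique {a b : ℕ → ℚ} (ha : FranelRecurrence a)
    (hb : FranelRecurrence b) (h0 : a 0 = b 0) (h1 : a 1 = b 1) : a = b := by
  funext n
  induction n using Nat.twoStepInduction with
  | zero => exact h0
  | one => exact h1
  | more n ih0 ih1 =>
    exact mul_left_cancel₀ (by positivity : ((n : ℚ) + 2) ^ 2 ≠ 0)
      (by rw [ha n, hb n, ih0, ih1])

theorem franelRecurrence_of_telescoping {F G : ℕ → ℕ → ℚ}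
    (hF : ∀ n k, n < k → F n k = 0) (hG_zero : ∀ n, G n 0 = 0)
    (hG_top : ∀ n, G n (n + 3) = 0)
    (htele : ∀ n k : ℕ, ((n : ℚ) + 2) ^ 2 * F (n + 2) k
      - (7 * n ^ 2 + 21 * n + 16) * F (n + 1) k - 8 * (n + 1) ^ 2 * F n k
      = G n (k + 1) - G n k) :
    FranelRecurrence fun n ↦ ∑ k ∈ range (n + 1), F n k := by
  intro n
  have hsum := sum_range_sub (G n) (n + 3)
  rw [hG_top, hG_zero, sub_zero, ← sum_congr rfl fun k _ ↦ htele n k, sum_sub_distrib,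
    sum_sub_distrib, ← mul_sum, ← mul_sum, ← mul_sum] at hsum
  have hextend : ∀ m ≤ n + 2, ∑ k ∈ range (m + 1), F m k = ∑ k ∈ range (n + 3), F m k :=
    fun m hm ↦ sum_subset (range_subset_range.2 (by omega))
      fun k _ hk ↦ hF m k (by simpa using hk)
  simp only [hextend (n + 2) le_rfl, hextend (n + 1) (by omega), hextend n (by omega)]
  linarith

/-! The certificates below are the ones produced by Zeilberger's algorithm. -/

def franelCertPoly (u v : ℚ) : ℚ :=
  (1 + 17 * v + 50 * v ^ 2 + 5 * u + 43 * u * v + 14 * u ^ 2) * u ^ 3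
    + (3 + 21 * v + 28 * v ^ 2) * u ^ 2 * v + (3 + 11 * v + 8 * v ^ 2) * u * v ^ 2
    + (v + 1) ^ 2 * v ^ 3

def franelCert (n : ℕ) : ℕ → ℚ
  | 0 => 0
  | k + 1 => -(((n + 1).choose k : ℚ) / (n + 1)) ^ 3 * franelCertPoly (n + 1 - k) k

theorem franel_telescoping (n k : ℕ) :
    ((n : ℚ) + 2) ^ 2 * ((n + 2).choose k : ℚ) ^ 3
      - (7 * n ^ 2 + 21 * n + 16) * ((n + 1).choose k : ℚ) ^ 3
      - 8 * (n + 1) ^ 2 * (n.choose k : ℚ) ^ 3 = franelCert n (k + 1) - franelCert n k := by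
  cases k with
  | zero =>
    simp only [franelCert, franelCertPoly, choose_zero_right]
    push_cast
    field_simp
    ring
  | succ j =>
    simp only [franelCert, franelCertPoly]
    rw [cast_choose_eq_succ_left n (j + 1), cast_choose_eq_succ_left (n + 1) (j + 1),
      cast_choose_eq_succ_left (n + 1) j, show n + 1 + 1 = n + 2 by ring,
      cast_choose_succ_right_eq (n + 2) j]
    push_cast
    field_simp
    ring

theorem franelRecurrence_franel : FranelRecurrence fun n ↦ (franel n : ℚ) := by
  have := franelRecurrence_of_telescoping (F := fun n k ↦ (n.choose k : ℚ) ^ 3)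
    (G := franelCert) (fun n k h ↦ by simp [choose_eq_zero_of_lt h]) (fun n ↦ rfl)
    (fun n ↦ by simp [franelCert]) franel_telescoping
  simpa [franel] using this

/-- `multinomCoeff n k * (-4) ^ (n - k)`, written without truncated subtraction. -/
def multinomTerm (n k : ℕ) : ℚ := multinomCoeff n k * (-4) ^ n / (-4) ^ k

def multinomCert (n : ℕ) : ℕ → ℚ
  | 0 => 0
  | k + 1 => -3 * (3 * n + 5) * (n + 2 * k + 2) * multinomTerm (n + 1) k

theorem multinomTerm_eq_zero {n k : ℕ} (h : n < k) : multinomTerm n k = 0 := by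
  simp [multinomTerm, multinomCoeff, choose_eq_zero_of_lt (by omega : n + 2 * k < 3 * k)]

theorem multinom_telescoping (n k : ℕ) :
    ((n : ℚ) + 2) ^ 2 * multinomTerm (n + 2) k
      - (7 * n ^ 2 + 21 * n + 16) * multinomTerm (n + 1) k - 8 * (n + 1) ^ 2 * multinomTerm n k =
      multinomCert n (k + 1) - multinomCert n k := by
  cases k with
  | zero =>
    simp only [multinomCert, multinomTerm, multinomCoeff, mul_zero, add_zero, choose_zero_right,
      choose_self]
    push_cast
    ring
  | succ j =>
    simp only [multinomCert, multinomTerm]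
    rw [cast_multinomCoeff_eq_succ_left n (j + 1),
      cast_multinomCoeff_eq_succ_left (n + 1) (j + 1), cast_multinomCoeff_eq_succ_left (n + 1) j,
      show n + 1 + 1 = n + 2 by ring, cast_multinomCoeff_succ_right_eq (n + 2) j]
    push_cast
    field_simp
    ring

def multinomSum (n : ℕ) : ℤ :=
  ∑ k ∈ range (n + 1), (multinomCoeff n k : ℤ) * (-4) ^ (n - k)

theorem cast_multinomSum (n : ℕ) :
    (multinomSum n : ℚ) = ∑ k ∈ range (n + 1), multinomTerm n k := by
  push_cast [multinomSum]
  refine sum_congr rfl fun k hk ↦ ?_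
  rw [multinomTerm, pow_sub₀ _ (by norm_num) (by simpa [Nat.lt_succ_iff] using hk)]
  ring

theorem franelRecurrence_multinomSum : FranelRecurrence fun n ↦ (multinomSum n : ℚ) := by
  simp only [cast_multinomSum]
  exact franelRecurrence_of_telescoping (G := multinomCert)
    (fun n k h ↦ multinomTerm_eq_zero h) (fun n ↦ rfl)
    (fun n ↦ by simp [multinomCert, multinomTerm_eq_zero (by omega : n + 1 < n + 2)])
    multinom_telescoping

theorem stmt_3 (n : ℕ) :
    (franel n : ℤ) =
      ∑ k ∈ Finset.range (n + 1),
        ((n + 2 * k).choose (3 * k) : ℤ) * ((3 * k).choose k : ℤ) *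
          ((2 * k).choose k : ℤ) * (-4) ^ (n - k) := by
  have h := franelRecurrence_franel.unique franelRecurrence_multinomSum
    (by norm_num [franel, multinomSum, multinomCoeff])
    (by norm_num [franel, multinomSum, multinomCoeff, sum_range_succ])
  have : (franel n : ℤ) = multinomSum n := by exact_mod_cast congrFun h n
  simpa [multinomSum, multinomCoeff] using this
end

section
/- Let n and k be nonnegative integers with k ≤ n. Then, as an identity of integers, 8·(2k+1)·∑_{m=k}^{n-1} (3m+1)·(-16)^{n-m-1}·C(2m,m)·C(m+2k,3k)·(-4)^{m-k} = C(2n,n)·C(n+2k,3k)·n·(k-n)·(-4)^{n-k}. -/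
/-!
The right-hand side `F n` satisfies the first-order recurrence
`F (n + 1) = -16 * F n + 8 (2k + 1) (3n + 1) C(2n, n) C(n + 2k, 3k) (-4)^(n - k)` with `F k = 0`,
which is checked using only the recurrences of `C(2n, n)` in `n` and of `C(m, 3k)` in `m`.
Unrolling the recurrence gives the sum.
-/

open Finset

theorem eq_sum_Ico_pow_mul_of_succ_eq {R : Type*} [CommSemiring R] (c : R) (F g : ℕ → R)
    {k : ℕ} (hk : F k = 0) (hsucc : ∀ n, k ≤ n → F (n + 1) = c * F n + g n)
    {n : ℕ} (hkn : k ≤ n) :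
    F n = ∑ m ∈ Ico k n, c ^ (n - m - 1) * g m := by
  induction n, hkn using Nat.le_induction with
  | base => simp [hk]
  | succ n hkn ih =>
    rw [hsucc n hkn, ih, sum_Ico_succ_top hkn, mul_sum, Nat.add_sub_cancel_left, Nat.sub_self,
      pow_zero, one_mul]
    congr 1
    refine sum_congr rfl fun m hm => ?_
    rw [← mul_assoc, ← pow_succ', show n + 1 - m - 1 = n - m - 1 + 1 by grind]

theorem Int.succ_mul_choose_two_mul_succ (n : ℕ) :
    ((n : ℤ) + 1) * ((2 * (n + 1)).choose (n + 1) : ℤ)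
      = 2 * (2 * n + 1) * ((2 * n).choose n : ℤ) := by
  exact_mod_cast Nat.succ_mul_centralBinom_succ n

theorem Int.choose_mul_succ_eq (m j : ℕ) (hj : j ≤ m + 1) :
    (m.choose j : ℤ) * ((m : ℤ) + 1) = ((m + 1).choose j : ℤ) * ((m : ℤ) + 1 - j) := by
  have h := Nat.choose_mul_succ_eq m j
  zify [hj] at h
  exact h

theorem stmt_4 (n k : ℕ) (hkn : k ≤ n) :
    8 * (2 * k + 1 : ℤ) *
        ∑ m ∈ Finset.Ico k n,
          (3 * m + 1 : ℤ) * (-16) ^ (n - m - 1) * ((2 * m).choose m : ℤ) *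
            ((m + 2 * k).choose (3 * k) : ℤ) * (-4) ^ (m - k)
      = ((2 * n).choose n : ℤ) * ((n + 2 * k).choose (3 * k) : ℤ) * n *
          ((k : ℤ) - n) * (-4) ^ (n - k) := by
  set F : ℕ → ℤ := fun n ↦
    ((2 * n).choose n : ℤ) * ((n + 2 * k).choose (3 * k) : ℤ) * n * ((k : ℤ) - n) * (-4) ^ (n - k)
  set g : ℕ → ℤ := fun m ↦ 8 * (2 * k + 1 : ℤ) * (3 * m + 1) * ((2 * m).choose m : ℤ) *
    ((m + 2 * k).choose (3 * k) : ℤ) * (-4) ^ (m - k)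
  have hsucc : ∀ n, k ≤ n → F (n + 1) = -16 * F n + g n := by
    intro n hkn
    have hbinom := Int.choose_mul_succ_eq (n + 2 * k) (3 * k) (by omega)
    simp only [F, g, show n + 1 - k = n - k + 1 by omega, pow_succ,
      show n + 1 + 2 * k = n + 2 * k + 1 by omega]
    push_cast at hbinom ⊢
    linear_combination (4 * (-4 : ℤ) ^ (n - k) * ((n + 2 * k + 1).choose (3 * k) : ℤ) *
        ((n : ℤ) + 1 - k)) * Int.succ_mul_choose_two_mul_succ n
      - (8 * (-4 : ℤ) ^ (n - k) * (2 * (n : ℤ) + 1) * ((2 * n).choose n : ℤ)) * hbinom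
  calc _ = ∑ m ∈ Ico k n, (-16) ^ (n - m - 1) * g m := by
        rw [mul_sum]
        exact sum_congr rfl fun m _ ↦ by ring
    _ = F n := (eq_sum_Ico_pow_mul_of_succ_eq _ F g (by simp [F]) hsucc hkn).symm
end

section
/- For every nonnegative integer k, C(3k,k) = (2k+1)·(C(3k,k) − 2·C(3k,k−1)), where C(3k,k−1) is interpreted as 0 when k = 0; in particular, 2k+1 divides C(3k,k). -/
theorem Nat.choose_three_mul_succ_mul (k : ℕ) :
    (3 * (k + 1)).choose (k + 1) * (k + 1) = (3 * (k + 1)).choose k * (2 * k + 3) := by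
  rw [Nat.choose_succ_right_eq]
  congr 1
  omega

theorem stmt_6 (k : ℕ) :
    (((3 * k).choose k : ℤ) =
        (2 * k + 1) *
          (((3 * k).choose k : ℤ) -
            2 * (if k = 0 then 0 else ((3 * k).choose (k - 1) : ℤ)))) ∧
      (2 * k + 1 : ℤ) ∣ ((3 * k).choose k : ℤ) := by
  have key : ((3 * k).choose k : ℤ) =
      (2 * k + 1) *
        (((3 * k).choose k : ℤ) -
          2 * (if k = 0 then 0 else ((3 * k).choose (k - 1) : ℤ))) := by
    rcases k with _ | k
    · simp
    · have h : ((3 * (k + 1)).choose (k + 1) * (k + 1) : ℤ) =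
          (3 * (k + 1)).choose k * (2 * k + 3) := mod_cast Nat.choose_three_mul_succ_mul k
      simp only [k.succ_ne_zero, if_false, Nat.add_sub_cancel]
      push_cast
      linear_combination (-2) * h
  exact ⟨key, Dvd.intro _ key.symm⟩
end

section
/- Let n and k be nonnegative integers with k ≤ n. Then ∑_{m=k}^{n} C(n,m)·C(m+2k,3k)·(-1)^{m-k} = C(2k,n-k)·(-1)^{n-k}, where C(2k,n-k) is interpreted as 0 when n-k > 2k. -/
/-!
Multiplying by `(-1)^(n-k)` turns the left-hand side into the `n`-th forward difference of
`x ↦ C(x, 3k)` at `x = 2k` (the terms with `m < k` vanish since then `m + 2k < 3k`). Each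
difference lowers the lower index by one, so this is `C(2k, 3k - n) = C(2k, n - k)`, and it is `0`
once `n > 3k`.
-/

open Finset fwdDiff

lemma fwdDiff_iter_choose_eq_ite (n b : ℕ) :
    Δ_[1] ^[n] (fun x ↦ x.choose b : ℕ → ℤ) = fun x ↦ if n ≤ b then x.choose (b - n) else 0 := by
  by_cases hnb : n ≤ b
  · obtain ⟨j, rfl⟩ := Nat.exists_eq_add_of_le hnb
    simp [fwdDiff_iter_choose]
  · obtain ⟨j, rfl⟩ := Nat.exists_eq_add_of_lt (not_le.mp hnb)
    ext x
    rw [if_neg hnb, show b + j + 1 = j + 1 + b by omega, Function.iterate_add_apply]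
    have hb : Δ_[1] ^[b] (fun x ↦ x.choose b : ℕ → ℤ) = fun x ↦ x.choose 0 := by
      simpa using fwdDiff_iter_choose 0 b
    rw [hb]
    simp only [Function.iterate_succ_apply, Nat.choose_zero_right, Nat.cast_one, fwdDiff_const]
    rw [Function.iterate_fixed (fwdDiff_const (1 : ℕ) (0 : ℤ))]

lemma sum_range_neg_one_pow_mul_choose_mul_choose_add (n a b : ℕ) :
    ∑ m ∈ range (n + 1), (-1 : ℤ) ^ (n - m) * n.choose m * (a + m).choose b
      = if n ≤ b then (a.choose (b - n) : ℤ) else 0 := by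
  have := fwdDiff_iter_eq_sum_shift 1 (fun x ↦ x.choose b : ℕ → ℤ) n a
  rw [fwdDiff_iter_choose_eq_ite] at this
  simp [this]

lemma neg_one_pow_sub_eq {R : Type*} [Monoid R] [HasDistribNeg R] {k m n : ℕ}
    (hkm : k ≤ m) (hmn : m ≤ n) :
    (-1 : R) ^ (m - k) = (-1) ^ (n - m) * (-1) ^ (n - k) := by
  rw [← pow_add, show n - m + (n - k) = m - k + 2 * (n - m) by omega, pow_add, pow_mul,
    neg_one_sq, one_pow, mul_one]

theorem stmt_7 (n k : ℕ) (hkn : k ≤ n) :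
    ∑ m ∈ Finset.Icc k n,
        (n.choose m : ℤ) * ((m + 2 * k).choose (3 * k) : ℤ) * (-1) ^ (m - k)
      = ((2 * k).choose (n - k) : ℤ) * (-1) ^ (n - k) := by
  have hsigns : ∀ m ∈ Icc k n, (n.choose m : ℤ) * (m + 2 * k).choose (3 * k) * (-1) ^ (m - k)
      = (-1) ^ (n - m) * n.choose m * (2 * k + m).choose (3 * k) * (-1) ^ (n - k) := by
    intro m hm
    rw [mem_Icc] at hm
    rw [neg_one_pow_sub_eq hm.1 hm.2, add_comm m]
    ring
  have hlow : ∀ m ∈ range (n + 1), m ∉ Icc k n →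
      (-1 : ℤ) ^ (n - m) * n.choose m * (2 * k + m).choose (3 * k) = 0 := by
    intro m hm hmIcc
    have hmk : m < k := by simp only [mem_range, mem_Icc] at hm hmIcc; omega
    simp [Nat.choose_eq_zero_of_lt (by omega : 2 * k + m < 3 * k)]
  have hIcc : Icc k n ⊆ range (n + 1) := fun m hm ↦ by simp only [mem_Icc, mem_range] at hm ⊢; omega
  rw [sum_congr rfl hsigns, ← sum_mul, sum_subset hIcc hlow,
    sum_range_neg_one_pow_mul_choose_mul_choose_add]
  congr 1
  split_ifs with h
  · rw [← Nat.choose_symm (by omega), show 2 * k - (3 * k - n) = n - k by omega]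
  · rw [Nat.choose_eq_zero_of_lt (by omega), Nat.cast_zero]
end

section
/- Let p be an odd prime and let k be an integer with 1 ≤ k < (p-1)/2. Then k·C(p+2k,3k)·C(3k,k) ≡ (-1)^{k-1}·p (mod p²). -/
/-!
Since `C(p+2k, 3k) C(3k, k) = C(p+2k, 2k) C(p, k)` and `k C(p, k) = p C(p-1, k-1)`, the left-hand
side equals `p C(p-1, k-1) C(p+2k, 2k)`, so it suffices to know the second factor modulo `p`.
There `C(p-1, j) ≡ (-1)^j` by Pascal's rule, and `C(p+2k, 2k) ≡ C(2k, 2k) = 1` by Lucas's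
theorem.
-/

namespace Nat

theorem add_choose_add_mul_choose (n a b : ℕ) :
    (n + a).choose (a + b) * (a + b).choose b = (n + a).choose a * n.choose b := by
  rw [← choose_symm_add (a := a)]
  simpa using choose_mul (n := n + a) (k := a + b) (le_add_right a b)

theorem mul_choose_eq_mul_choose_pred {n k : ℕ} (hk : 0 < k) :
    k * n.choose k = n * (n - 1).choose (k - 1) := by
  obtain _ | n := n
  · simp [choose_eq_zero_of_lt hk]
  obtain _ | k := k
  · cases hk
  simpa [mul_comm] using (add_one_mul_choose_eq n k).symm

theorem Prime.choose_pred_modEq_neg_one_pow {p : ℕ} (hp : p.Prime) {j : ℕ} (hj : j < p) :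
    ((p - 1).choose j : ℤ) ≡ (-1) ^ j [ZMOD p] := by
  induction j with
  | zero => simp [Int.ModEq.refl]
  | succ j ih =>
    have pascal : ((p - 1).choose j + (p - 1).choose (j + 1) : ℤ) = p.choose (j + 1) := by
      exact_mod_cast (choose_succ_right p j hp.pos).symm
    have hdvd : (p.choose (j + 1) : ℤ) ≡ 0 [ZMOD p] := Int.modEq_zero_iff_dvd.mpr <|
      Int.natCast_dvd_natCast.mpr (hp.dvd_choose_self j.succ_ne_zero hj)
    calc ((p - 1).choose (j + 1) : ℤ) = p.choose (j + 1) - (p - 1).choose j := by linarith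
      _ ≡ 0 - (-1) ^ j [ZMOD p] := hdvd.sub (ih (by omega))
      _ = (-1) ^ (j + 1) := by ring

theorem Prime.add_choose_modEq {p a b : ℕ} (hp : p.Prime) (ha : a < p) (hb : b < p) :
    ((p + a).choose b : ℤ) ≡ a.choose b [ZMOD p] := by
  have := Fact.mk hp
  have hlucas := Choose.choose_modEq_choose_mod_mul_choose_div (p := p) (n := p + a) (k := b)
  rwa [add_mod_left, add_div_left _ hp.pos, mod_eq_of_lt ha, mod_eq_of_lt hb,
    div_eq_of_lt ha, div_eq_of_lt hb, choose_zero_right, cast_one, mul_one] at hlucas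

end Nat

theorem stmt_8_general (p : ℕ) (hp : p.Prime) (k : ℕ)
    (hk1 : 1 ≤ k) (hk2 : k < (p - 1) / 2) :
    ((k : ℤ) * ((p + 2 * k).choose (3 * k) : ℤ) * ((3 * k).choose k : ℤ))
      ≡ (-1) ^ (k - 1) * p [ZMOD (p ^ 2 : ℕ)] := by
  have hfactor : k * ((p + 2 * k).choose (3 * k) * (3 * k).choose k)
      = p * ((p - 1).choose (k - 1) * (p + 2 * k).choose (2 * k)) := by
    rw [show 3 * k = 2 * k + k by ring, Nat.add_choose_add_mul_choose, mul_left_comm,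
      Nat.mul_choose_eq_mul_choose_pred hk1]
    ring
  have hmod : ((p - 1).choose (k - 1) * (p + 2 * k).choose (2 * k) : ℤ)
      ≡ (-1) ^ (k - 1) [ZMOD p] := by
    simpa using (hp.choose_pred_modEq_neg_one_pow (j := k - 1) (by omega)).mul
      (hp.add_choose_modEq (a := 2 * k) (b := 2 * k) (by omega) (by omega))
  rw [mul_assoc, ← Nat.cast_mul, ← Nat.cast_mul, hfactor, mul_comm _ (p : ℤ), Nat.cast_pow,
    sq]
  exact_mod_cast hmod.mul_left' (c := p)

theorem stmt_8 (p : ℕ) (hp : p.Prime) (hodd : Odd p) (k : ℕ)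
    (hk1 : 1 ≤ k) (hk2 : k < (p - 1) / 2) :
    ((k : ℤ) * ((p + 2 * k).choose (3 * k) : ℤ) * ((3 * k).choose k : ℤ))
      ≡ (-1) ^ (k - 1) * p [ZMOD (p ^ 2 : ℕ)] :=
  stmt_8_general p hp k hk1 hk2
end

section
/- Let p be an odd prime and let k be an integer with (p+1)/2 ≤ k < p. Then k·C(p+2k,3k)·C(3k,k) ≡ (-1)^{k-1}·2p (mod p²). -/
/-!
Since `C(p+2k,3k) C(3k,k) = C(p+2k,2k) C(p,k)` and `k C(p,k) = p C(p-1,k-1)`, the left side is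
`p · C(p-1,k-1) C(p+2k,2k)`, so it suffices to know the cofactor modulo `p`. There
`C(p-1,k-1) ≡ (-1)^(k-1)`, and writing `2k = p + r` with `r < p`, Lucas' theorem gives
`C(2p+r, p+r) ≡ C(2,1) C(r,r) = 2`.
-/

namespace Nat

theorem choose_pred_prime_modEq_neg_one_pow {p : ℕ} (hp : p.Prime) :
    ∀ {k : ℕ}, k < p → ((p - 1).choose k : ℤ) ≡ (-1) ^ k [ZMOD p]
  | 0, _ => by simp [Int.ModEq.refl]
  | k + 1, hk => by
    have hpascal : p.choose (k + 1) = (p - 1).choose k + (p - 1).choose (k + 1) := by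
      conv_lhs => rw [← Nat.sub_add_cancel hp.one_le]
      exact Nat.choose_succ_succ' _ _
    have hdvd : (p : ℤ) ∣ (p - 1).choose k + (p - 1).choose (k + 1) := by
      exact_mod_cast hpascal ▸ hp.dvd_choose_self k.succ_ne_zero hk
    have ih := choose_pred_prime_modEq_neg_one_pow hp (k.lt_succ_self.trans hk)
    calc ((p - 1).choose (k + 1) : ℤ)
        ≡ -((p - 1).choose k) [ZMOD p] :=
          Int.modEq_iff_dvd.mpr (by simpa [sub_eq_add_neg, add_comm] using hdvd.neg_right)
      _ ≡ -(-1) ^ k [ZMOD p] := ih.neg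
      _ = (-1) ^ (k + 1) := by ring

theorem choose_mul_add_modEq {p : ℕ} [Fact p.Prime] (a b : ℕ) {r s : ℕ} (hr : r < p)
    (hs : s < p) :
    ((a * p + r).choose (b * p + s) : ℤ) ≡ a.choose b * r.choose s [ZMOD p] := by
  have hp : 0 < p := (Fact.out : p.Prime).pos
  have hmod (c t : ℕ) (ht : t < p) : (c * p + t) % p = t := by
    rw [add_comm, Nat.add_mul_mod_self_right, Nat.mod_eq_of_lt ht]
  have hdiv (c t : ℕ) (ht : t < p) : (c * p + t) / p = c := by
    rw [add_comm, Nat.add_mul_div_right _ _ hp, Nat.div_eq_of_lt ht, zero_add]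
  have lucas := Choose.choose_modEq_choose_mod_mul_choose_div (n := a * p + r) (k := b * p + s)
    (p := p)
  rw [hmod a r hr, hmod b s hs, hdiv a r hr, hdiv b s hs] at lucas
  rwa [mul_comm (r.choose s : ℤ)] at lucas

theorem mul_choose_three_mul_mul_choose_eq {n k : ℕ} (hk0 : 0 < k) (hkn : k ≤ n) :
    k * (n + 2 * k).choose (3 * k) * (3 * k).choose k
      = n * ((n - 1).choose (k - 1) * (n + 2 * k).choose (2 * k)) := by
  have htri := Nat.choose_mul (n := n + 2 * k) (k := 3 * k) (s := 2 * k) (by omega)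
  have habsorb := Nat.add_one_mul_choose_eq (n - 1) (k - 1)
  rw [Nat.choose_symm_of_eq_add (show 3 * k = 2 * k + k by ring),
    show n + 2 * k - 2 * k = n by omega, show 3 * k - 2 * k = k by omega] at htri
  rw [Nat.sub_add_cancel (by omega), Nat.sub_add_cancel hk0] at habsorb
  calc k * (n + 2 * k).choose (3 * k) * (3 * k).choose k
      = (n + 2 * k).choose (2 * k) * (n.choose k * k) := by rw [mul_assoc, htri]; ring
    _ = _ := by rw [← habsorb]; ring

end Nat

theorem stmt_9_general (p : ℕ) (hp : p.Prime) (k : ℕ)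
    (hk1 : (p + 1) / 2 ≤ k) (hk2 : k < p) :
    ((k : ℤ) * ((p + 2 * k).choose (3 * k) : ℤ) * ((3 * k).choose k : ℤ))
      ≡ (-1) ^ (k - 1) * (2 * p) [ZMOD (p ^ 2 : ℕ)] := by
  have := Fact.mk hp
  have hfactor := Nat.mul_choose_three_mul_mul_choose_eq (by omega : 0 < k) hk2.le
  have hcentral : ((p + 2 * k).choose (2 * k) : ℤ) ≡ 2 [ZMOD p] := by
    have := Nat.choose_mul_add_modEq (p := p) 2 1 (r := 2 * k - p) (s := 2 * k - p)
      (by omega) (by omega)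
    rwa [show 2 * p + (2 * k - p) = p + 2 * k by omega, show 1 * p + (2 * k - p) = 2 * k by omega,
      Nat.choose_self, Nat.choose_one_right, Nat.cast_one, Nat.cast_ofNat, mul_one] at this
  have hcofactor := ((Nat.choose_pred_prime_modEq_neg_one_pow hp (by omega : k - 1 < p)).mul
    hcentral).mul_left' (c := p)
  rw [← Nat.cast_mul, ← Nat.cast_mul, ← Nat.cast_mul, ← hfactor] at hcofactor
  push_cast at hcofactor ⊢
  convert hcofactor using 1 <;> ring

theorem stmt_9 (p : ℕ) (hp : p.Prime) (hodd : Odd p) (k : ℕ)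
    (hk1 : (p + 1) / 2 ≤ k) (hk2 : k < p) :
    ((k : ℤ) * ((p + 2 * k).choose (3 * k) : ℤ) * ((3 * k).choose k : ℤ))
      ≡ (-1) ^ (k - 1) * (2 * p) [ZMOD (p ^ 2 : ℕ)] :=
  stmt_9_general p hp k hk1 hk2
end

section
/- Let p be an odd prime and set k = (p-1)/2. Then C(p+2k,3k)·C(3k,k)·C(2k,k)·(k-p) = −p·C(2p-1,p-1)·C(p-1,(p-1)/2)², and consequently C(p+2k,3k)·C(3k,k)·C(2k,k)·(k-p) ≡ −p·16^{p-1} (mod p³). -/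
/-!
The identity is a rearrangement of factorials. For the congruence, work in `ZMod (p ^ 2)`, where
`ε = p` satisfies `ε ^ 2 = 0`, so that `∏ (ε + aᵢ) = (∏ aᵢ) (1 + ε ∑ aᵢ⁻¹)` for units `aᵢ`.
Pairing `1/i` with `1/(p - i)` shows `p H_{p-1} = 0`, hence `C(2p-1, p-1) = ∏ (1 + p/j) = 1`.
With `p = 2k + 1`, writing `k! C(2k, k) = ∏_{j ≤ k} (p - j)` and
`(2k)! = 2^k k! ∏_{j ≤ k} (p - 2j)` gives two expressions
`C(2k, k) = (-1)^k (1 - p H_k) = (-4)^k (1 - p H_k / 2)`.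
Comparing them yields `4^k = 1 - p H_k / 2`, hence `C(2k, k) = (-1)^k 16^k` and
`C(2p-1, p-1) C(2k, k)^2 = 16^(p-1)` modulo `p ^ 2`.
-/

open Finset Nat

namespace Finset

variable {ι R : Type*} [CommRing R] {ε : R}

theorem prod_one_add_mul_of_sq_eq_zero (hε : ε ^ 2 = 0) (s : Finset ι) (x : ι → R) :
    ∏ i ∈ s, (1 + ε * x i) = 1 + ε * ∑ i ∈ s, x i := by
  classical
  induction s using Finset.induction_on with
  | empty => simp
  | insert a s ha ih =>
    rw [prod_insert ha, sum_insert ha, ih]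
    linear_combination x a * (∑ i ∈ s, x i) * hε

theorem prod_add_of_sq_eq_zero (hε : ε ^ 2 = 0) {s : Finset ι} {a b : ι → R}
    (hab : ∀ i ∈ s, a i * b i = 1) :
    ∏ i ∈ s, (ε + a i) = (∏ i ∈ s, a i) * (1 + ε * ∑ i ∈ s, b i) := by
  rw [← prod_one_add_mul_of_sq_eq_zero hε, ← prod_mul_distrib]
  refine prod_congr rfl fun i hi => ?_
  linear_combination (-ε) * hab i hi

end Finset

namespace Nat

theorem factorial_two_mul_eq_mul_prod_odd (n : ℕ) :
    (2 * n)! = 2 ^ n * n ! * ∏ i ∈ range n, (2 * i + 1) := by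
  induction n with
  | zero => simp
  | succ n ih =>
    rw [show 2 * (n + 1) = 2 * n + 1 + 1 by ring, factorial_succ, factorial_succ, ih,
      prod_range_succ, factorial_succ n]
    ring

theorem add_one_mul_choose_mul_choose (k : ℕ) :
    (k + 1) * (4 * k + 1).choose (3 * k) * (3 * k).choose k =
      (2 * k + 1) * (4 * k + 1).choose (2 * k) * (2 * k).choose k := by
  have h3 := choose_mul (n := 4 * k + 1) (k := 3 * k) (s := k) (by omega)
  have h2 := choose_mul (n := 4 * k + 1) (k := 2 * k) (s := k) (by omega)
  have hs := choose_succ_right_eq (3 * k + 1) k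
  rw [show 4 * k + 1 - k = 3 * k + 1 by omega, show 3 * k - k = 2 * k by omega,
    choose_symm_of_eq_add (show 3 * k + 1 = 2 * k + (k + 1) by omega)] at h3
  rw [show 4 * k + 1 - k = 3 * k + 1 by omega, show 2 * k - k = k by omega] at h2
  rw [show 3 * k + 1 - k = 2 * k + 1 by omega] at hs
  calc (k + 1) * (4 * k + 1).choose (3 * k) * (3 * k).choose k
      = (4 * k + 1).choose k * ((3 * k + 1).choose (k + 1) * (k + 1)) := by
        rw [mul_assoc, h3]; ring
    _ = (2 * k + 1) * ((4 * k + 1).choose k * (3 * k + 1).choose k) := by rw [hs]; ring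
    _ = (2 * k + 1) * (4 * k + 1).choose (2 * k) * (2 * k).choose k := by rw [← h2, mul_assoc]

end Nat

namespace ZMod

variable {p : ℕ}

theorem natCast_sq_self : (p : ZMod (p ^ 2)) ^ 2 = 0 := by
  exact_mod_cast natCast_self (p ^ 2)

theorem natCast_mul_inv_eq_one_of_lt (hp : p.Prime) {i : ℕ} (hi0 : 0 < i) (hip : i < p) :
    (i : ZMod (p ^ 2)) * (i : ZMod (p ^ 2))⁻¹ = 1 :=
  coe_mul_inv_eq_one i <| Nat.Coprime.pow_right 2 <|
    Nat.coprime_comm.mp <| hp.coprime_iff_not_dvd.mpr (Nat.not_dvd_of_pos_of_lt hi0 hip)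

theorem two_mul_inv_two_of_odd (hodd : Odd p) : (2 : ZMod (p ^ 2)) * 2⁻¹ = 1 := by
  exact_mod_cast coe_mul_inv_eq_one 2 (Nat.Coprime.pow_right 2 (Nat.coprime_two_left.mpr hodd))

theorem isUnit_factorial (hp : p.Prime) {n : ℕ} (hn : n < p) :
    IsUnit ((n ! : ℕ) : ZMod (p ^ 2)) :=
  (isUnit_iff_coprime _ _).mpr <| Nat.Coprime.pow_right 2 <|
    Nat.coprime_comm.mp <| hp.coprime_iff_not_dvd.mpr fun h => by
      have := hp.dvd_factorial.mp h; omega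

/-- The harmonic number `H_n` in `ZMod (p ^ 2)`; only meaningful for `n < p`, since `⁻¹` sends
non-units of `ZMod (p ^ 2)` to `0`. -/
def harmonicModSq (p n : ℕ) : ZMod (p ^ 2) := ∑ i ∈ range n, ((i + 1 : ℕ) : ZMod (p ^ 2))⁻¹

theorem prod_range_natCast_add_mul (hp : p.Prime) {c d : ZMod (p ^ 2)} (hcd : c * d = 1)
    {n : ℕ} (hn : n < p) :
    ∏ i ∈ range n, ((p : ZMod (p ^ 2)) + c * ((i + 1 : ℕ) : ZMod (p ^ 2))) =
      c ^ n * ((n ! : ℕ) : ZMod (p ^ 2)) * (1 + (p : ZMod (p ^ 2)) * (d * harmonicModSq p n)) := by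
  rw [prod_add_of_sq_eq_zero natCast_sq_self (b := fun i => d * ((i + 1 : ℕ) : ZMod (p ^ 2))⁻¹),
    prod_mul_distrib, prod_const, card_range, ← mul_sum, ← prod_range_add_one_eq_factorial,
    Nat.cast_prod, harmonicModSq]
  intro i hi
  have := natCast_mul_inv_eq_one_of_lt hp i.succ_pos (by simp at hi; omega)
  linear_combination (c * d) * this + hcd

theorem natCast_mul_harmonicModSq_sub_one (hp : p.Prime) (hodd : Odd p) :
    (p : ZMod (p ^ 2)) * harmonicModSq p (p - 1) = 0 := by
  -- `1/a + 1/b = (a + b)/(ab) = p/(ab)` when `a + b = p`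
  have hpair : ∀ i ∈ range (p - 1), (p : ZMod (p ^ 2)) *
      (((i + 1 : ℕ) : ZMod (p ^ 2))⁻¹ + ((p - 1 - 1 - i + 1 : ℕ) : ZMod (p ^ 2))⁻¹) = 0 := by
    intro i hi
    rw [mem_range] at hi
    have ha := natCast_mul_inv_eq_one_of_lt hp i.succ_pos (by omega)
    have hb := natCast_mul_inv_eq_one_of_lt hp (i := p - 1 - 1 - i + 1) (by omega) (by omega)
    have hab : ((i + 1 : ℕ) : ZMod (p ^ 2)) + ((p - 1 - 1 - i + 1 : ℕ) : ZMod (p ^ 2)) = p := by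
      rw [← Nat.cast_add, show i + 1 + (p - 1 - 1 - i + 1) = p by omega]
    set a := ((i + 1 : ℕ) : ZMod (p ^ 2))
    set b := ((p - 1 - 1 - i + 1 : ℕ) : ZMod (p ^ 2))
    linear_combination (-(p : ZMod (p ^ 2)) * b⁻¹) * ha + (-(p : ZMod (p ^ 2)) * a⁻¹) * hb
      + ((p : ZMod (p ^ 2)) * a⁻¹ * b⁻¹) * hab + (a⁻¹ * b⁻¹) * natCast_sq_self
  have h2 : 2 * ((p : ZMod (p ^ 2)) * harmonicModSq p (p - 1)) = 0 := by
    rw [two_mul, ← mul_add]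
    nth_rewrite 2 [harmonicModSq]
    rw [← sum_range_reflect, harmonicModSq, ← sum_add_distrib, mul_sum]
    exact sum_eq_zero hpair
  linear_combination (2 : ZMod (p ^ 2))⁻¹ * h2 -
    ((p : ZMod (p ^ 2)) * harmonicModSq p (p - 1)) * two_mul_inv_two_of_odd hodd

theorem choose_two_mul_sub_one_eq_one (hp : p.Prime) (hodd : Odd p) :
    (((2 * p - 1).choose (p - 1) : ℕ) : ZMod (p ^ 2)) = 1 := by
  have hp1 : p - 1 < p := Nat.sub_one_lt hp.ne_zero
  have hprod : (((p - 1)! : ℕ) : ZMod (p ^ 2)) * ((2 * p - 1).choose (p - 1) : ℕ) =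
      ∏ i ∈ range (p - 1), ((p : ZMod (p ^ 2)) + 1 * ((i + 1 : ℕ) : ZMod (p ^ 2))) := by
    have h := ascFactorial_eq_factorial_mul_choose p (p - 1)
    rw [ascFactorial_eq_prod_range, show p + (p - 1) = 2 * p - 1 by omega] at h
    rw [← Nat.cast_mul, ← h, Nat.cast_prod]
    push_cast
    ring_nf
  rw [prod_range_natCast_add_mul hp (mul_one 1) hp1, one_mul, one_pow, one_mul,
    natCast_mul_harmonicModSq_sub_one hp hodd, add_zero] at hprod
  exact (isUnit_factorial hp hp1).mul_left_cancel hprod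

section CentralBinom

variable {k : ℕ}

theorem choose_two_mul_self_eq_neg_one_pow_mul (hp : p.Prime) (hpk : p = 2 * k + 1) :
    (((2 * k).choose k : ℕ) : ZMod (p ^ 2)) =
      (-1) ^ k * (1 - (p : ZMod (p ^ 2)) * harmonicModSq p k) := by
  have hkp : k < p := by omega
  have hdesc : ((k ! : ℕ) : ZMod (p ^ 2)) * ((2 * k).choose k : ℕ) =
      ∏ i ∈ range k, ((p : ZMod (p ^ 2)) + (-1) * ((i + 1 : ℕ) : ZMod (p ^ 2))) := by
    rw [← Nat.cast_mul, ← descFactorial_eq_factorial_mul_choose, descFactorial_eq_prod_range,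
      Nat.cast_prod]
    refine prod_congr rfl fun i hi => ?_
    rw [mem_range] at hi
    rw [Nat.cast_sub (by omega), hpk]
    push_cast
    ring
  rw [prod_range_natCast_add_mul hp (d := -1) (by ring) hkp] at hdesc
  exact (isUnit_factorial hp hkp).mul_left_cancel (by rw [hdesc]; ring)

theorem natCast_prod_range_two_mul_add_one (hpk : p = 2 * k + 1) :
    ((∏ i ∈ range k, (2 * i + 1) : ℕ) : ZMod (p ^ 2)) =
      ∏ i ∈ range k, ((p : ZMod (p ^ 2)) + (-2) * ((i + 1 : ℕ) : ZMod (p ^ 2))) := by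
  rw [← prod_range_reflect, Nat.cast_prod]
  refine prod_congr rfl fun i hi => ?_
  rw [mem_range] at hi
  have hsum := congrArg (Nat.cast : ℕ → ZMod (p ^ 2))
    (show 2 * (k - 1 - i) + 1 + 2 * (i + 1) = p by omega)
  push_cast at hsum ⊢
  linear_combination hsum

theorem choose_two_mul_self_eq_neg_one_pow_mul_four_pow_mul (hp : p.Prime) (hpk : p = 2 * k + 1) :
    (((2 * k).choose k : ℕ) : ZMod (p ^ 2)) =
      (-1) ^ k * 4 ^ k * (1 - (p : ZMod (p ^ 2)) * (2⁻¹ * harmonicModSq p k)) := by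
  have hkp : k < p := by omega
  have hf := isUnit_factorial hp hkp
  have hfact : (((2 * k).choose k : ℕ) : ZMod (p ^ 2)) * (k ! : ℕ) * (k ! : ℕ) =
      (2 : ZMod (p ^ 2)) ^ k * (k ! : ℕ) *
        ∏ i ∈ range k, ((p : ZMod (p ^ 2)) + (-2) * ((i + 1 : ℕ) : ZMod (p ^ 2))) := by
    have h2k := choose_mul_factorial_mul_factorial (show k ≤ 2 * k by omega)
    rw [show 2 * k - k = k by omega, factorial_two_mul_eq_mul_prod_odd] at h2k
    rw [← natCast_prod_range_two_mul_add_one hpk]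
    exact_mod_cast congrArg (Nat.cast : ℕ → ZMod (p ^ 2)) h2k
  have hcd : (-2 : ZMod (p ^ 2)) * -2⁻¹ = 1 := by
    linear_combination two_mul_inv_two_of_odd (⟨k, hpk⟩ : Odd p)
  rw [prod_range_natCast_add_mul hp hcd hkp] at hfact
  have h4 : (4 : ZMod (p ^ 2)) ^ k = 2 ^ k * 2 ^ k := by rw [← mul_pow]; norm_num
  refine (hf.mul hf).mul_right_cancel ?_
  rw [← mul_assoc, hfact, neg_pow 2, h4]
  ring

/-- Morley's congruence modulo `p ^ 2`. -/
theorem choose_two_mul_self_eq_neg_one_pow_mul_sixteen_pow (hp : p.Prime) (hpk : p = 2 * k + 1) :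
    (((2 * k).choose k : ℕ) : ZMod (p ^ 2)) = (-1) ^ k * 16 ^ k := by
  have hC₁ := choose_two_mul_self_eq_neg_one_pow_mul hp hpk
  have hC₂ := choose_two_mul_self_eq_neg_one_pow_mul_four_pow_mul hp hpk
  have ht := two_mul_inv_two_of_odd (⟨k, hpk⟩ : Odd p)
  have hs : ((-1 : ZMod (p ^ 2)) ^ k) ^ 2 = 1 := by
    rw [← pow_mul, mul_comm, pow_mul]; norm_num
  have h16 : (16 : ZMod (p ^ 2)) ^ k = (4 ^ k) ^ 2 := by
    rw [← pow_mul, mul_comm, pow_mul]; norm_num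
  rw [h16]
  set C := (((2 * k).choose k : ℕ) : ZMod (p ^ 2))
  set ε := (p : ZMod (p ^ 2))
  set h := harmonicModSq p k
  set t := (2 : ZMod (p ^ 2))⁻¹
  set s := (-1 : ZMod (p ^ 2)) ^ k
  set y := (4 : ZMod (p ^ 2)) ^ k
  have hε : ε ^ 2 = 0 := natCast_sq_self
  have hy₁ : y * (1 - ε * (t * h)) = 1 - ε * h := by
    linear_combination s * (hC₁ - hC₂) - (y * (1 - ε * (t * h)) - (1 - ε * h)) * hs
  have hy₂ : y = 1 - ε * t * h := by
    linear_combination (1 + ε * t * h) * hy₁ + (y * t ^ 2 * h ^ 2 - t * h ^ 2) * hε + ε * h * ht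
  linear_combination hC₁ - s * (y + 1 - ε * t * h) * hy₂ + s * ε * h * ht - s * t ^ 2 * h ^ 2 * hε

theorem choose_two_mul_sub_one_mul_choose_sq (hp : p.Prime) (hpk : p = 2 * k + 1) :
    (((2 * p - 1).choose (p - 1) : ℕ) : ZMod (p ^ 2)) * (((2 * k).choose k : ℕ) : ZMod (p ^ 2)) ^ 2
      = 16 ^ (p - 1) := by
  rw [choose_two_mul_sub_one_eq_one hp ⟨k, hpk⟩,
    choose_two_mul_self_eq_neg_one_pow_mul_sixteen_pow hp hpk, one_mul, mul_pow, ← pow_mul,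
    ← pow_mul, mul_comm k 2, pow_mul, neg_one_sq, one_pow, one_mul, hpk, Nat.add_sub_cancel]

end CentralBinom

end ZMod

theorem stmt_10 (p : ℕ) (hp : p.Prime) (hodd : Odd p) (k : ℕ) (hk : k = (p - 1) / 2) :
    (((p + 2 * k).choose (3 * k) : ℤ) * ((3 * k).choose k : ℤ) * ((2 * k).choose k : ℤ) *
          ((k : ℤ) - p)
        = -(p : ℤ) * ((2 * p - 1).choose (p - 1) : ℤ) * ((p - 1).choose ((p - 1) / 2) : ℤ) ^ 2) ∧
      (((p + 2 * k).choose (3 * k) : ℤ) * ((3 * k).choose k : ℤ) * ((2 * k).choose k : ℤ) *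
          ((k : ℤ) - p)
        ≡ -(p : ℤ) * 16 ^ (p - 1) [ZMOD (p ^ 3 : ℕ)]) := by
  have hpk : p = 2 * k + 1 := by obtain ⟨m, rfl⟩ := hodd; omega
  have hmid : (p - 1).choose ((p - 1) / 2) = (2 * k).choose k := by
    rw [← hk, hpk, Nat.add_sub_cancel]
  have hid : ((p + 2 * k).choose (3 * k) : ℤ) * ((3 * k).choose k : ℤ) *
      ((2 * k).choose k : ℤ) * ((k : ℤ) - p) =
      -(p : ℤ) * ((2 * p - 1).choose (p - 1) : ℤ) * ((2 * k).choose k : ℤ) ^ 2 := by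
    have := congrArg (Nat.cast : ℕ → ℤ) (Nat.add_one_mul_choose_mul_choose k)
    rw [show p + 2 * k = 4 * k + 1 by omega, show 2 * p - 1 = 4 * k + 1 by omega,
      show p - 1 = 2 * k by omega, hpk]
    push_cast at this ⊢
    linear_combination (-((2 * k).choose k : ℤ)) * this
  have hsq : ((2 * p - 1).choose (p - 1) * (2 * k).choose k ^ 2 : ℤ) ≡ 16 ^ (p - 1)
      [ZMOD (p ^ 2 : ℕ)] := by
    rw [← ZMod.intCast_eq_intCast_iff]
    push_cast
    exact ZMod.choose_two_mul_sub_one_mul_choose_sq hp hpk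
  rw [hmid]
  refine ⟨hid, hid ▸ ?_⟩
  convert (hsq.mul_left' (c := (p : ℤ))).neg using 1 <;> push_cast <;> ring
end

section
/- Let p be an odd prime. Then, in the field ℤ/pℤ, ∑_{k=0}^{p-1} C(2k,k)·f_k·((-16)^k)^{-1} = ∑_{m=0}^{(p-1)/2} C((p-1)/2, m)·f_m·(4^m)^{-1}, where (x)^{-1} denotes the multiplicative inverse modulo p. -/
open Nat

theorem Nat.cast_choose_succ_right_mul {R : Type*} [CommRing R] (n k : ℕ) :
    (n.choose (k + 1) : R) * (k + 1) = n.choose k * (n - k) := by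
  rcases le_or_gt k n with hkn | hnk
  · have := congrArg (Nat.cast : ℕ → R) (choose_succ_right_eq n k)
    push_cast [Nat.cast_sub hkn] at this
    exact this
  · simp [choose_eq_zero_of_lt hnk, choose_eq_zero_of_lt (hnk.trans (lt_succ_self k))]

-- `C(2k, k) = (-4)^k C(-1/2, k)`, multiplied by `k!` so that it holds in every ring where `n = -1/2`.
theorem factorial_mul_choose_two_mul_eq {R : Type*} [CommRing R] {n : ℕ}
    (hn : (2 * n + 1 : R) = 0) (k : ℕ) :
    (k ! : R) * (2 * k).choose k = (-4) ^ k * k ! * n.choose k := by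
  induction k with
  | zero => simp
  | succ k ih =>
    have hcentral : ((k : R) + 1) * (2 * (k + 1)).choose (k + 1)
        = 2 * (2 * k + 1) * (2 * k).choose k := by
      have := congrArg (Nat.cast : ℕ → R) (succ_mul_centralBinom_succ k)
      push_cast [centralBinom_eq_two_mul_choose] at this
      exact this
    have hchoose := Nat.cast_choose_succ_right_mul (R := R) n k
    push_cast [factorial_succ] at hcentral ⊢
    linear_combination (k ! : R) * hcentral + 2 * (2 * k + 1) * ih
      - (-4) ^ (k + 1) * (k ! : R) * hchoose + 2 * (-4) ^ k * (k ! : R) * n.choose k * hn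

theorem ZMod.choose_two_mul_eq_neg_four_pow_mul_choose {n k : ℕ} [Fact (2 * n + 1).Prime]
    (hk : k < 2 * n + 1) :
    ((2 * k).choose k : ZMod (2 * n + 1)) = (-4) ^ k * n.choose k := by
  have hfact : (k ! : ZMod (2 * n + 1)) ≠ 0 := by
    rw [Ne, ZMod.natCast_eq_zero_iff, (Fact.out : (2 * n + 1).Prime).dvd_factorial]
    omega
  have hn : (2 * n + 1 : ZMod (2 * n + 1)) = 0 := by exact_mod_cast ZMod.natCast_self _
  apply mul_left_cancel₀ hfact
  rw [factorial_mul_choose_two_mul_eq hn]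
  ring

theorem stmt_13 (p : ℕ) (hp : p.Prime) (hodd : Odd p) :
    ∑ k ∈ Finset.range p,
        ((2 * k).choose k : ZMod p) * (franel k : ZMod p) * ((-16 : ZMod p) ^ k)⁻¹
      = ∑ m ∈ Finset.range ((p - 1) / 2 + 1),
          (((p - 1) / 2).choose m : ZMod p) * (franel m : ZMod p) * ((4 : ZMod p) ^ m)⁻¹ := by
  obtain ⟨n, rfl⟩ := hodd
  have : Fact (2 * n + 1).Prime := ⟨hp⟩
  rw [show (2 * n + 1 - 1) / 2 = n by omega]
  have hn : (2 * n + 1 : ZMod (2 * n + 1)) = 0 := by exact_mod_cast ZMod.natCast_self _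
  have hneg4 : (-4 : ZMod (2 * n + 1)) ≠ 0 :=
    left_ne_zero_of_mul_eq_one (b := -(n : ZMod (2 * n + 1)) ^ 2)
      (by linear_combination (2 * (n : ZMod (2 * n + 1)) - 1) * hn)
  calc _ = ∑ k ∈ Finset.range (2 * n + 1),
        (n.choose k : ZMod (2 * n + 1)) * franel k * ((4 : ZMod (2 * n + 1)) ^ k)⁻¹ := by
        refine Finset.sum_congr rfl fun k hk => ?_
        rw [ZMod.choose_two_mul_eq_neg_four_pow_mul_choose (Finset.mem_range.mp hk),
          show (-16 : ZMod (2 * n + 1)) = -4 * 4 by norm_num, mul_pow, mul_inv]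
        field_simp
    _ = _ := by
        refine (Finset.sum_subset (Finset.range_subset_range.mpr (by omega)) fun k _ hk => ?_).symm
        rw [choose_eq_zero_of_lt (by simpa using hk)]
        simp
end

section
/- Let n be an odd nonnegative integer. Then ∑_{k=0}^{n} (-1)^k·C(n,k)·C(3k,k)·C(3n−3k, n−k) = 0. -/
/-!
Under `k ↦ n - k` the two products of binomials are swapped while, `n` being odd, the sign
`(-1) ^ k` flips; so the terms cancel in pairs.
-/

open Finset

theorem neg_one_pow_sub_of_odd {R : Type*} [Monoid R] [HasDistribNeg R] {n k : ℕ}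
    (hn : Odd n) (hk : k ≤ n) : (-1 : R) ^ (n - k) = -(-1) ^ k := by
  obtain ⟨m, rfl⟩ := Nat.exists_eq_add_of_le hk
  rw [Nat.add_sub_cancel_left]
  rcases Nat.even_or_odd k with hk' | hk'
  · rw [hk'.neg_one_pow, (Nat.odd_add'.mp hn |>.mpr hk').neg_one_pow]
  · rw [hk'.neg_one_pow, (Nat.odd_add.mp hn |>.mp hk').neg_one_pow, neg_neg]

theorem sum_range_eq_zero_of_add_reflect_eq_zero {M : Type*} [AddCommMonoid M] {n : ℕ}
    (hn : Odd n) (f : ℕ → M) (hf : ∀ k ≤ n, f k + f (n - k) = 0) :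
    ∑ k ∈ range (n + 1), f k = 0 := by
  refine sum_involution (fun k _ => n - k) (fun k hk => hf k (by simp at hk; omega))
    (fun k hk _ => ?_) (fun k _ => by simp) (fun k hk => by simp at hk ⊢; omega)
  obtain ⟨m, rfl⟩ := hn
  omega

theorem stmt_16 (n : ℕ) (hn : Odd n) :
    ∑ k ∈ Finset.range (n + 1),
        (-1 : ℤ) ^ k * (n.choose k : ℤ) * ((3 * k).choose k : ℤ) *
          ((3 * n - 3 * k).choose (n - k) : ℤ) = 0 := by
  refine sum_range_eq_zero_of_add_reflect_eq_zero hn _ fun k hk => ?_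
  rw [neg_one_pow_sub_of_odd hn hk, Nat.choose_symm hk, ← Nat.mul_sub, ← Nat.mul_sub,
    Nat.sub_sub_self hk]
  ring
end

section
/- Let p be a prime, let a be a positive integer, and let k be an integer with 0 ≤ k ≤ p-1. Then C(a·p − 1, k)·C(a·p + k, k) ≡ (-1)^k (mod p²). -/
/-!
With `n = a p`, the numerators of the two binomial coefficients pair up as
`(n - i)(n + i) = n² - i² ≡ -i² (mod n²)` for `i = 1, …, k`, so
`k!² · C(n - 1, k) · C(n + k, k) ≡ (-1)^k · k!²` modulo `n²`, hence modulo `p²`.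
Since `k < p`, `k!` is invertible modulo `p²` and can be cancelled.
-/

open Finset Nat Polynomial

section Pochhammer

variable {R : Type*} [CommRing R]

theorem descPochhammer_eval_sub_one_mul_ascPochhammer_eval_add_one (x : R) (k : ℕ) :
    (descPochhammer R k).eval (x - 1) * (ascPochhammer R k).eval (x + 1) =
      ∏ i ∈ range k, (x ^ 2 - ((i : R) + 1) ^ 2) := by
  induction k with
  | zero => simp
  | succ k ih =>
    rw [descPochhammer_succ_eval, ascPochhammer_succ_eval, prod_range_succ, ← ih]
    ring

theorem descPochhammer_eval_sub_one_mul_ascPochhammer_eval_add_one_of_sq_eq_zero {x : R}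
    (hx : x ^ 2 = 0) (k : ℕ) :
    (descPochhammer R k).eval (x - 1) * (ascPochhammer R k).eval (x + 1) =
      (-1) ^ k * (k ! : R) ^ 2 := by
  have hfactor (i : ℕ) : x ^ 2 - ((i : R) + 1) ^ 2 = -1 * ((i + 1 : ℕ) : R) ^ 2 := by
    rw [hx]; push_cast; ring
  rw [descPochhammer_eval_sub_one_mul_ascPochhammer_eval_add_one,
    prod_congr rfl fun i _ => hfactor i, prod_mul_distrib, prod_const, card_range,
    prod_pow, ← cast_prod, prod_range_add_one_eq_factorial]

end Pochhammer

theorem factorial_sq_mul_choose_sub_one_mul_choose_add {R : Type*} [CommRing R] {n : ℕ}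
    (hn : 0 < n) (hsq : (n : R) ^ 2 = 0) (k : ℕ) :
    (k ! : R) ^ 2 * ((n - 1).choose k * (n + k).choose k) = (k ! : R) ^ 2 * (-1) ^ k := by
  have hdesc : (descPochhammer R k).eval ((n : R) - 1) = (n - 1).descFactorial k := by
    rw [← descPochhammer_eval_eq_descFactorial, Nat.cast_sub hn, Nat.cast_one]
  have hasc : (ascPochhammer R k).eval ((n : R) + 1) = (n + k).descFactorial k := by
    rw [← Nat.cast_succ, ascPochhammer_nat_eq_natCast_descFactorial, Nat.succ_add_sub_one]
  have := descPochhammer_eval_sub_one_mul_ascPochhammer_eval_add_one_of_sq_eq_zero hsq k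
  rw [hdesc, hasc, descFactorial_eq_factorial_mul_choose, descFactorial_eq_factorial_mul_choose]
    at this
  push_cast at this
  linear_combination this

theorem ZMod.isUnit_factorial_of_lt_prime {p k : ℕ} (hp : p.Prime) (hk : k < p) (m : ℕ) :
    IsUnit (k ! : ZMod (p ^ m)) := by
  rw [ZMod.isUnit_iff_coprime]
  have hcop : Nat.Coprime p k ! :=
    hp.coprime_iff_not_dvd.mpr fun h => hk.not_ge (hp.dvd_factorial.mp h)
  exact hcop.symm.pow_right m

theorem stmt_17 (p : ℕ) (hp : p.Prime) (a : ℕ) (ha : 0 < a) (k : ℕ) (hk : k ≤ p - 1) :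
    (((a * p - 1).choose k : ℤ) * ((a * p + k).choose k : ℤ))
      ≡ (-1) ^ k [ZMOD (p ^ 2 : ℕ)] := by
  rw [← ZMod.intCast_eq_intCast_iff]
  have hsq : ((a * p : ℕ) : ZMod (p ^ 2)) ^ 2 = 0 := by
    rw [Nat.cast_mul, mul_pow, ← Nat.cast_pow p, ZMod.natCast_self, mul_zero]
  have hkp : k < p := by have := hp.pos; omega
  have hunit := (ZMod.isUnit_factorial_of_lt_prime hp hkp 2).pow 2
  push_cast
  exact hunit.mul_left_cancel
    (factorial_sq_mul_choose_sub_one_mul_choose_add (mul_pos ha hp.pos) hsq k)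
end
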